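/- Let p be a prime, d ∈ ℕ, α > 1/2, let γ = (γ_u) be weights with 0 < γ_u ≤ 1, and let λ ∈ [1/2, α). Then the average over all generating vectors satisfies (1/(p−1)^d) Σ_{z∈{1,…,p−1}^d} E(p,z)^{1/λ} ≤ (2/(p−1)) · V_d(α/λ, γ^{1/λ}). -/

import Mathlib

open scoped BigOperators Classical

noncomputable section

/-- Real Riemann zeta value `ζ(β) = Σ_{k≥1} k^{-β}` (for `β > 1`). -/
def zetaR (β : ℝ) : ℝ := ∑' k : ℕ, ((k + 1 : ℝ)) ^ (-β)

/-- Support of a frequency vector. -/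
def suppF {d : ℕ} (h : Fin d → ℤ) : Finset (Fin d) := Finset.univ.filter (fun j => h j ≠ 0)

/-- The Korobov weight function `r_{d,α,γ}`. -/
def rKor (d : ℕ) (α : ℝ) (γ : Finset (Fin d) → ℝ) (h : Fin d → ℤ) : ℝ :=
  if h = 0 then 1 else (γ (suppF h))⁻¹ * ∏ j ∈ suppF h, |(h j : ℝ)| ^ α

/-- `V_d(β, γ) = Σ_{∅ ≠ u ⊆ {1,…,d}} γ_u (2ζ(β))^{|u|}`. -/
def Vd (d : ℕ) (β : ℝ) (γ : Finset (Fin d) → ℝ) : ℝ :=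
  ∑ u ∈ Finset.univ.filter (fun u : Finset (Fin d) => u.Nonempty), γ u * (2 * zetaR β) ^ u.card

/-- The set of generating vectors `{1,…,p-1}^d`. -/
def genSet (d p : ℕ) : Finset (Fin d → ℤ) :=
  Fintype.piFinset (fun _ => Finset.Icc (1 : ℤ) ((p : ℤ) - 1))

/-- Nonzero dual lattice points: `h ≠ 0` with `h·z ≡ 0 (mod p)`. -/
def dualLat (d p : ℕ) (z : Fin d → ℤ) : Set (Fin d → ℤ) :=
  {h | h ≠ 0 ∧ (p : ℤ) ∣ ∑ j, h j * z j}

/-- Worst-case error of the lattice rule `Q_p^z` on the Korobov class. -/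
def Edet (d : ℕ) (α : ℝ) (γ : Finset (Fin d) → ℝ) (p : ℕ) (z : Fin d → ℤ) : ℝ :=
  Real.sqrt (∑' h : dualLat d p z, ((rKor d α γ h.1) ^ 2)⁻¹)

/-- Quadrature error of the lattice rule `Q_p^z` on the function with
Fourier coefficients `a`. -/
def err (d p : ℕ) (z : Fin d → ℤ) (a : (Fin d → ℤ) → ℂ) : ℂ :=
  ∑' h : dualLat d p z, a h.1

/-- The Korobov norm of the coefficient sequence `a`. -/
def korNorm (d : ℕ) (α : ℝ) (γ : Finset (Fin d) → ℝ) (a : (Fin d → ℤ) → ℂ) : ℝ :=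
  Real.sqrt (∑' h : Fin d → ℤ, (rKor d α γ h) ^ 2 * ‖a h‖ ^ 2)

/-- Membership of the coefficient sequence in the Korobov class (`‖a‖ < ∞`). -/
def korSummable (d : ℕ) (α : ℝ) (γ : Finset (Fin d) → ℝ) (a : (Fin d → ℤ) → ℂ) : Prop :=
  Summable (fun h : Fin d → ℤ => (rKor d α γ h) ^ 2 * ‖a h‖ ^ 2)

/-- The median (the `(N+1)/2`-th smallest value for odd `N`). -/
def medianR {N : ℕ} (f : Fin N → ℝ) : ℝ :=
  (List.insertionSort (· ≤ ·) (List.ofFn f)).getD ((N - 1) / 2) 0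

/-- The median of complex numbers: medians of real and imaginary parts. -/
def medianC {N : ℕ} (f : Fin N → ℂ) : ℂ :=
  (medianR fun k => (f k).re) + (medianR fun k => (f k).im) * Complex.I

/-- The set `P_n` of primes `p` with `⌈n/2⌉ + 1 ≤ p ≤ n`. -/
def Pset (n : ℕ) : Finset ℕ := (Finset.Icc ((n + 1) / 2 + 1) n).filter Nat.Prime

/-- The sample space of a single draw: pairs `(p, z)` with `p ∈ P_n`,
`z ∈ {1,…,p-1}^d`. -/
def allPairs (n d : ℕ) : Finset ((_ : ℕ) × (Fin d → ℤ)) :=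
  (Pset n).sigma (fun p => genSet d p)

/-- The probability of one pair `(p,z)`: `p` uniform on `P_n`, and given `p`,
`z` uniform on `{1,…,p-1}^d`. -/
def pairWeight (n d : ℕ) (pz : (_ : ℕ) × (Fin d → ℤ)) : ℝ :=
  (((Pset n).card : ℝ))⁻¹ * (((pz.1 : ℝ) - 1) ^ d)⁻¹

/-- Number of repetitions used by the median algorithm `M_n`. -/
def numReps (h : ℕ → ℝ) (n : ℕ) : ℕ := 2 * ⌈h n * Real.logb 2 n⌉₊ + 1

/-- Expectation, over the `N` independent draws of the median algorithm,
of a function `g` of the draws. -/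
def expDraws (n d N : ℕ) (g : (Fin N → (_ : ℕ) × (Fin d → ℤ)) → ℝ) : ℝ :=
  ∑ ω ∈ Fintype.piFinset (fun _ : Fin N => allPairs n d),
    (∏ k, pairWeight n d (ω k)) * g ω

/-- Product weights `γ_u = ∏_{j ∈ u} γ_j`. -/
def prodW (d : ℕ) (γ : ℕ → ℝ) : Finset (Fin d) → ℝ := fun u => ∏ j ∈ u, γ (j : ℕ)

/-!
Since `1 / (2λ) ≤ 1`, the map `t ↦ t ^ (1 / (2λ))` is subadditive, so
`E(p,z)^{1/λ} ≤ Σ_{h ∈ dual} r(h)^{-1/λ}`, and `r(h)^{-1/λ}` is the Korobov term with exponent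
`α/λ > 1` and weights `γ^{1/λ}`, whose sum over all `h ≠ 0` is `V_d(α/λ, γ^{1/λ})`.
Summing over `z` and swapping the sums, each `h` is counted once for every `z` with
`h·z ≡ 0 (mod p)`. If `p` divides every `h_j`, that is all `(p-1)^d` vectors, but then
`h = p m` and the term carries an extra factor `p^{-α/λ} ≤ 1/p`; otherwise the congruence fixes
`z_j` for a coordinate with `p ∤ h_j`, leaving at most `(p-1)^{d-1}` vectors. Each of the two
parts is at most `(p-1)^{d-1} V_d`.
-/

open scoped ENNReal

namespace ENNReal

variable {ι : Type*}

theorem rpow_sum_le_sum_rpow (s : Finset ι) (f : ι → ℝ≥0∞) {θ : ℝ} (hθ₀ : 0 < θ) (hθ₁ : θ ≤ 1) :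
    (∑ i ∈ s, f i) ^ θ ≤ ∑ i ∈ s, f i ^ θ := by
  induction s using Finset.cons_induction with
  | empty => simp [hθ₀]
  | cons a s ha ih =>
    rw [Finset.sum_cons, Finset.sum_cons]
    exact (rpow_add_le_add_rpow _ _ hθ₀.le hθ₁).trans (add_le_add_right ih _)

theorem rpow_tsum_le_tsum_rpow (f : ι → ℝ≥0∞) {θ : ℝ} (hθ₀ : 0 < θ) (hθ₁ : θ ≤ 1) :
    (∑' i, f i) ^ θ ≤ ∑' i, f i ^ θ := by
  rw [ENNReal.tsum_eq_iSup_sum, ← orderIsoRpow_apply θ hθ₀, OrderIso.map_iSup]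
  exact iSup_le fun s => (rpow_sum_le_sum_rpow s f hθ₀ hθ₁).trans (ENNReal.sum_le_tsum s)

theorem tsum_pi_prod {β : Type*} :
    ∀ {d : ℕ} (g : Fin d → β → ℝ≥0∞), ∑' x : Fin d → β, ∏ j, g j (x j) = ∏ j, ∑' k, g j k
  | 0, g => by simp
  | d + 1, g => by
    rw [← (Fin.consEquiv fun _ => β).tsum_eq, ENNReal.tsum_prod', Fin.prod_univ_succ,
      ← tsum_pi_prod fun j => g j.succ, ← ENNReal.tsum_mul_right]
    refine tsum_congr fun k => ?_
    rw [← ENNReal.tsum_mul_left]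
    simp [Fin.consEquiv, Fin.prod_univ_succ]

end ENNReal

lemma zetaR_nonneg {b : ℝ} : 0 ≤ zetaR b :=
  tsum_nonneg fun k => Real.rpow_nonneg (by positivity) _

lemma ofReal_zetaR {b : ℝ} (hb : 1 < b) :
    ENNReal.ofReal (zetaR b) = ∑' n : ℕ, ENNReal.ofReal (((n : ℝ) + 1) ^ (-b)) := by
  have hsum : Summable fun n : ℕ => ((n : ℝ) + 1) ^ (-b) := by
    simpa using (summable_nat_add_iff 1).2 (Real.summable_nat_rpow.2 (by linarith : -b < -1))
  exact ENNReal.ofReal_tsum_of_nonneg (fun n => by positivity) hsum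

lemma tsum_int_ite_abs_rpow_neg {b : ℝ} (hb : 1 < b) :
    ∑' k : ℤ, (if k = 0 then 0 else ENNReal.ofReal (|(k : ℝ)| ^ (-b))) =
      ENNReal.ofReal (2 * zetaR b) := by
  have hpos (n : ℕ) : |(((n : ℤ) + 1 : ℤ) : ℝ)| = (n : ℝ) + 1 := by
    push_cast; exact abs_of_pos (by positivity)
  have hneg (n : ℕ) : |((-((n : ℤ) + 1) : ℤ) : ℝ)| = (n : ℝ) + 1 := by
    push_cast; rw [abs_neg]; exact abs_of_pos (by positivity)
  rw [tsum_of_add_one_of_neg_add_one ENNReal.summable ENNReal.summable, if_pos rfl, add_zero,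
    two_mul, ENNReal.ofReal_add zetaR_nonneg zetaR_nonneg, ofReal_zetaR hb]
  congr 1 <;> refine tsum_congr fun n => ?_
  · rw [if_neg (by omega), hpos]
  · rw [if_neg (by omega), hneg]

section Korobov

variable {d : ℕ}

lemma mem_suppF {h : Fin d → ℤ} {j : Fin d} : j ∈ suppF h ↔ h j ≠ 0 := by
  simp [suppF]

lemma suppF_nonempty_iff {h : Fin d → ℤ} : (suppF h).Nonempty ↔ h ≠ 0 := by
  simp [Finset.Nonempty, mem_suppF, funext_iff]

lemma suppF_eq_iff {h : Fin d → ℤ} {u : Finset (Fin d)} : suppF h = u ↔ ∀ j, (j ∈ u ↔ h j ≠ 0) := by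
  simp only [Finset.ext_iff, mem_suppF]
  exact forall_congr' fun j => Iff.comm

def korobovTerm (b : ℝ) (w : Finset (Fin d) → ℝ≥0∞) (h : Fin d → ℤ) : ℝ≥0∞ :=
  if h = 0 then 0 else w (suppF h) * ∏ j ∈ suppF h, ENNReal.ofReal (|(h j : ℝ)| ^ (-b))

lemma tsum_korobovTerm {b : ℝ} (hb : 1 < b) (w : Finset (Fin d) → ℝ≥0∞) :
    ∑' h, korobovTerm b w h =
      ∑ u ∈ Finset.univ.filter Finset.Nonempty, w u * ENNReal.ofReal (2 * zetaR b) ^ u.card := by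
  set φ : ℤ → ℝ≥0∞ := fun k => if k = 0 then 1 else ENNReal.ofReal (|(k : ℝ)| ^ (-b))
  -- `g u` is the product of the one-dimensional factors, restricted to the `h` with support `u`
  set g : Finset (Fin d) → Fin d → ℤ → ℝ≥0∞ := fun u j k => if (j ∈ u ↔ k ≠ 0) then φ k else 0
  have hsplit (h : Fin d → ℤ) :
      korobovTerm b w h = ∑ u ∈ Finset.univ.filter Finset.Nonempty, w u * ∏ j, g u j (h j) := by
    have hprod (u : Finset (Fin d)) :
        ∏ j, g u j (h j) = if suppF h = u then ∏ j, φ (h j) else 0 := by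
      simp only [g, Fintype.prod_ite_zero]
      by_cases hs : suppF h = u
      · rw [if_pos hs, if_pos (suppF_eq_iff.1 hs)]
      · rw [if_neg hs, if_neg (mt suppF_eq_iff.2 hs)]
    have hφ : ∏ j, φ (h j) = ∏ j ∈ suppF h, ENNReal.ofReal (|(h j : ℝ)| ^ (-b)) := by
      unfold suppF
      rw [Finset.prod_filter]
      simp only [φ, ite_not]
    simp only [hprod, mul_ite, mul_zero, Finset.sum_ite_eq, Finset.mem_filter, Finset.mem_univ,
      true_and, suppF_nonempty_iff, korobovTerm, hφ]
    by_cases h0 : h = 0 <;> simp [h0]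
  have hfactor (u : Finset (Fin d)) (j : Fin d) :
      ∑' k, g u j k = if j ∈ u then ENNReal.ofReal (2 * zetaR b) else 1 := by
    by_cases hj : j ∈ u
    · rw [if_pos hj, ← tsum_int_ite_abs_rpow_neg hb]
      refine tsum_congr fun k => ?_
      by_cases hk : k = 0 <;> simp [g, φ, hj, hk]
    · rw [if_neg hj, ← tsum_ite_eq (0 : ℤ) fun _ => (1 : ℝ≥0∞)]
      refine tsum_congr fun k => ?_
      by_cases hk : k = 0 <;> simp [g, φ, hj, hk]
  rw [tsum_congr hsplit, Summable.tsum_finsetSum fun _ _ => ENNReal.summable]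
  refine Finset.sum_congr rfl fun u _ => ?_
  rw [ENNReal.tsum_mul_left, ENNReal.tsum_pi_prod, Finset.prod_congr rfl fun j _ => hfactor u j,
    Finset.prod_ite_mem, Finset.univ_inter, Finset.prod_const]

lemma korobovTerm_zero (b : ℝ) (w : Finset (Fin d) → ℝ≥0∞) : korobovTerm b w 0 = 0 := if_pos rfl

lemma korobovTerm_smul (b : ℝ) (w : Finset (Fin d) → ℝ≥0∞) {c : ℤ} (hc : c ≠ 0)
    (m : Fin d → ℤ) :
    korobovTerm b w (c • m) =
      ENNReal.ofReal (|(c : ℝ)| ^ (-b)) ^ (suppF m).card * korobovTerm b w m := by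
  have hsupp : suppF (c • m) = suppF m := by
    ext j
    simp [mem_suppF, hc]
  by_cases hm : m = 0
  · simp [hm, korobovTerm_zero]
  rw [korobovTerm, if_neg (smul_ne_zero hc hm), korobovTerm, if_neg hm, hsupp,
    mul_left_comm, ← Finset.prod_const, ← Finset.prod_mul_distrib]
  congr 2 with j
  rw [Pi.smul_apply, smul_eq_mul, Int.cast_mul, abs_mul,
    Real.mul_rpow (abs_nonneg _) (abs_nonneg _), ENNReal.ofReal_mul (by positivity)]

lemma korobovTerm_smul_le {b : ℝ} (hb : 0 ≤ b) (w : Finset (Fin d) → ℝ≥0∞) {c : ℤ}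
    (hc : c ≠ 0) (m : Fin d → ℤ) :
    korobovTerm b w (c • m) ≤ ENNReal.ofReal (|(c : ℝ)| ^ (-b)) * korobovTerm b w m := by
  rw [korobovTerm_smul b w hc]
  by_cases hm : m = 0
  · simp [hm, korobovTerm_zero]
  have hle : ENNReal.ofReal (|(c : ℝ)| ^ (-b)) ≤ 1 := by
    refine ENNReal.ofReal_le_one.2 (Real.rpow_le_one_of_one_le_of_nonpos ?_ (neg_nonpos.2 hb))
    exact_mod_cast Int.one_le_abs hc
  gcongr
  exact pow_le_of_le_one zero_le hle (Finset.card_ne_zero.2 (suppF_nonempty_iff.2 hm))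

lemma tsum_indicator_dvd_korobovTerm_le {b : ℝ} (hb : 0 ≤ b) (w : Finset (Fin d) → ℝ≥0∞)
    {c : ℤ} (hc : c ≠ 0) :
    ∑' h, {h : Fin d → ℤ | ∀ j, c ∣ h j}.indicator (korobovTerm b w) h ≤
      ENNReal.ofReal (|(c : ℝ)| ^ (-b)) * ∑' h, korobovTerm b w h := by
  have hrange : {h : Fin d → ℤ | ∀ j, c ∣ h j} = Set.range (c • · : (Fin d → ℤ) → Fin d → ℤ) := by
    ext h
    refine ⟨fun hdvd => ⟨fun j => h j / c, funext fun j => Int.mul_ediv_cancel' (hdvd j)⟩, ?_⟩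
    rintro ⟨m, rfl⟩ j
    exact Dvd.intro (m j) rfl
  rw [← tsum_subtype, hrange, tsum_range _ (smul_right_injective _ hc), ← ENNReal.tsum_mul_left]
  exact ENNReal.tsum_le_tsum fun m => korobovTerm_smul_le hb w hc m

lemma Vd_nonneg (b : ℝ) {w : Finset (Fin d) → ℝ} (hw : ∀ u : Finset (Fin d), u.Nonempty → 0 ≤ w u) :
    0 ≤ Vd d b w :=
  Finset.sum_nonneg fun u hu =>
    mul_nonneg (hw u (Finset.mem_filter.1 hu).2)
      (pow_nonneg (mul_nonneg zero_le_two zetaR_nonneg) _)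

lemma tsum_korobovTerm_ofReal {b : ℝ} (hb : 1 < b) {w : Finset (Fin d) → ℝ}
    (hw : ∀ u : Finset (Fin d), u.Nonempty → 0 ≤ w u) :
    ∑' h, korobovTerm b (fun u => ENNReal.ofReal (w u)) h = ENNReal.ofReal (Vd d b w) := by
  have hζ : 0 ≤ 2 * zetaR b := mul_nonneg zero_le_two zetaR_nonneg
  rw [tsum_korobovTerm hb, Vd, ENNReal.ofReal_sum_of_nonneg fun u hu =>
    mul_nonneg (hw u (Finset.mem_filter.1 hu).2) (pow_nonneg hζ _)]
  refine Finset.sum_congr rfl fun u hu => ?_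
  rw [ENNReal.ofReal_mul (hw u (Finset.mem_filter.1 hu).2), ENNReal.ofReal_pow hζ]

end Korobov

section WorstCaseError

variable {d : ℕ} {α : ℝ} {γ : Finset (Fin d) → ℝ}

lemma Edet_nonneg (p : ℕ) (z : Fin d → ℤ) : 0 ≤ Edet d α γ p z := Real.sqrt_nonneg _

lemma inv_rKor_sq {h : Fin d → ℤ} (hh : h ≠ 0) :
    (rKor d α γ h ^ 2)⁻¹ = (γ (suppF h) * ∏ j ∈ suppF h, |(h j : ℝ)| ^ (-α)) ^ 2 := by
  rw [rKor, if_neg hh, ← inv_pow, mul_inv, inv_inv, ← Finset.prod_inv_distrib]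
  congr 3 with j
  exact (Real.rpow_neg (abs_nonneg _) α).symm

lemma ofReal_inv_rKor_sq_rpow {lam : ℝ} (hlam : 0 < lam)
    (hγ : ∀ u : Finset (Fin d), u.Nonempty → 0 ≤ γ u) {h : Fin d → ℤ} (hh : h ≠ 0) :
    ENNReal.ofReal ((rKor d α γ h ^ 2)⁻¹) ^ (1 / (2 * lam)) =
      korobovTerm (α / lam) (fun u => ENNReal.ofReal (γ u ^ (1 / lam))) h := by
  have hγh : 0 ≤ γ (suppF h) := hγ _ (suppF_nonempty_iff.2 hh)
  have habs (j : Fin d) : 0 ≤ |(h j : ℝ)| ^ (-α) := by positivity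
  rw [inv_rKor_sq hh, ENNReal.ofReal_rpow_of_nonneg (sq_nonneg _) (by positivity),
    ← Real.rpow_natCast, ← Real.rpow_mul (by positivity),
    show ((2 : ℕ) : ℝ) * (1 / (2 * lam)) = 1 / lam by push_cast; field_simp,
    Real.mul_rpow hγh (Finset.prod_nonneg fun j _ => habs j),
    ← Real.finsetProd_rpow _ _ fun j _ => habs j, korobovTerm, if_neg hh,
    ENNReal.ofReal_mul (by positivity), ENNReal.ofReal_prod_of_nonneg fun j _ => by positivity]
  congr 2 with j
  rw [← Real.rpow_mul (abs_nonneg _)]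
  ring_nf

lemma ofReal_Edet_rpow_le {lam : ℝ} (hlam : 1 / 2 ≤ lam)
    (hγ : ∀ u : Finset (Fin d), u.Nonempty → 0 ≤ γ u) (p : ℕ) (z : Fin d → ℤ) :
    ENNReal.ofReal (Edet d α γ p z ^ (1 / lam)) ≤
      ∑' h : dualLat d p z,
        korobovTerm (α / lam) (fun u => ENNReal.ofReal (γ u ^ (1 / lam))) h := by
  have hlam0 : 0 < lam := by linarith
  set T := ∑' h : dualLat d p z, ENNReal.ofReal ((rKor d α γ h ^ 2)⁻¹)
  have hEdet : Edet d α γ p z ^ (1 / lam) = T.toReal ^ (1 / (2 * lam)) := by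
    rw [Edet, ENNReal.tsum_toReal_eq fun _ => ENNReal.ofReal_ne_top, Real.sqrt_eq_rpow]
    simp_rw [ENNReal.toReal_ofReal (inv_nonneg.2 (sq_nonneg _))]
    rw [← Real.rpow_mul (tsum_nonneg fun _ => inv_nonneg.2 (sq_nonneg _))]
    congr 1
    field_simp
  calc ENNReal.ofReal (Edet d α γ p z ^ (1 / lam))
      = ENNReal.ofReal T.toReal ^ (1 / (2 * lam)) := by
        rw [hEdet, ENNReal.ofReal_rpow_of_nonneg ENNReal.toReal_nonneg (by positivity)]
    _ ≤ T ^ (1 / (2 * lam)) := by gcongr; exact ENNReal.ofReal_toReal_le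
    _ ≤ ∑' h : dualLat d p z, ENNReal.ofReal ((rKor d α γ h ^ 2)⁻¹) ^ (1 / (2 * lam)) :=
        ENNReal.rpow_tsum_le_tsum_rpow _ (by positivity) (by rw [div_le_one] <;> linarith)
    _ = _ := tsum_congr fun h => ofReal_inv_rKor_sq_rpow hlam0 hγ h.2.1

end WorstCaseError

lemma card_genSet (d p : ℕ) : (genSet d p).card = (p - 1) ^ d := by
  simp [genSet, Fintype.card_piFinset, Int.card_Icc]

section Counting

variable {d p : ℕ}

lemma eq_of_dvd_dot_of_eqOn_ne (hp : p.Prime) {h : Fin d → ℤ} {j₀ : Fin d}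
    (hj₀ : ¬ (p : ℤ) ∣ h j₀) {z z' : Fin d → ℤ} (hz : z ∈ genSet d p) (hz' : z' ∈ genSet d p)
    (hdvd : (p : ℤ) ∣ ∑ j, h j * z j) (hdvd' : (p : ℤ) ∣ ∑ j, h j * z' j)
    (heq : ∀ j, j ≠ j₀ → z j = z' j) : z = z' := by
  have hdiff : ∑ j, h j * z j - ∑ j, h j * z' j = h j₀ * (z j₀ - z' j₀) := by
    rw [← Finset.sum_sub_distrib, Finset.sum_eq_single j₀ (fun j _ hj => by rw [heq j hj]; ring)
      (by simp)]
    ring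
  have hp_dvd : (p : ℤ) ∣ z j₀ - z' j₀ :=
    (Int.Prime.dvd_mul' hp (hdiff ▸ dvd_sub hdvd hdvd')).resolve_left hj₀
  have hb := Finset.mem_Icc.1 (Fintype.mem_piFinset.1 hz j₀)
  have hb' := Finset.mem_Icc.1 (Fintype.mem_piFinset.1 hz' j₀)
  have hj₀eq : z j₀ = z' j₀ :=
    sub_eq_zero.1 (Int.eq_zero_of_abs_lt_dvd hp_dvd (abs_lt.2 ⟨by omega, by omega⟩))
  funext j
  by_cases hj : j = j₀
  · exact hj ▸ hj₀eq
  · exact heq j hj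

lemma sub_one_mul_card_filter_dvd_dot_le (hp : p.Prime) {h : Fin d → ℤ} {j₀ : Fin d}
    (hj₀ : ¬ (p : ℤ) ∣ h j₀) :
    (p - 1) * ((genSet d p).filter fun z => (p : ℤ) ∣ ∑ j, h j * z j).card ≤ (p - 1) ^ d := by
  -- a solution `z` is determined by its coordinates off `j₀`
  have hcard :
      ((genSet d p).filter fun z => (p : ℤ) ∣ ∑ j, h j * z j).card ≤ (p - 1) ^ (d - 1) := by
    calc _ ≤ (Fintype.piFinset fun _ : {j // j ≠ j₀} => Finset.Icc (1 : ℤ) (p - 1)).card := by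
          refine Finset.card_le_card_of_injOn (fun z j => z j) (fun z hz => ?_)
            fun z hz z' hz' hzz' => ?_
          · exact Fintype.mem_piFinset.2 fun j =>
              Fintype.mem_piFinset.1 (Finset.mem_filter.1 hz).1 j
          · rw [Finset.mem_coe, Finset.mem_filter] at hz hz'
            exact eq_of_dvd_dot_of_eqOn_ne hp hj₀ hz.1 hz'.1 hz.2 hz'.2
              fun j hj => congrFun hzz' ⟨j, hj⟩
      _ = (p - 1) ^ (d - 1) := by simp [Fintype.card_piFinset, Int.card_Icc]
  calc (p - 1) * _ ≤ (p - 1) * (p - 1) ^ (d - 1) := Nat.mul_le_mul_left _ hcard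
    _ = (p - 1) ^ d := by rw [← pow_succ', Nat.sub_add_cancel (Fin.pos j₀)]

lemma sum_tsum_dualLat_eq_tsum_card_mul (f : (Fin d → ℤ) → ℝ≥0∞) (hf : f 0 = 0) :
    ∑ z ∈ genSet d p, ∑' h : dualLat d p z, f h =
      ∑' h, ((genSet d p).filter fun z => (p : ℤ) ∣ ∑ j, h j * z j).card * f h := by
  simp_rw [tsum_subtype]
  rw [← Summable.tsum_finsetSum fun _ _ => ENNReal.summable]
  refine tsum_congr fun h => ?_
  by_cases h0 : h = 0
  · simp [h0, hf]
  simp [Set.indicator_apply, dualLat, h0, Finset.sum_ite]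

lemma natCast_sub_one_mul_ofReal_rpow_neg_le_one {b : ℝ} (hb : 1 ≤ b) (hp : 0 < p) :
    ((p - 1 : ℕ) : ℝ≥0∞) * ENNReal.ofReal ((p : ℝ) ^ (-b)) ≤ 1 := by
  have hp1 : (1 : ℝ) ≤ p := by exact_mod_cast (by omega : 1 ≤ p)
  rw [← ENNReal.ofReal_natCast, ← ENNReal.ofReal_mul (by positivity)]
  refine ENNReal.ofReal_le_one.2 ?_
  calc ((p - 1 : ℕ) : ℝ) * (p : ℝ) ^ (-b) ≤ ((p : ℝ) - 1) * (p : ℝ) ^ (-1 : ℝ) := by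
        rw [Nat.cast_sub (by omega), Nat.cast_one]
        gcongr
    _ ≤ 1 := by
        rw [Real.rpow_neg_one, mul_inv_le_iff₀ (by positivity)]
        linarith

-- Multiplied through by `p - 1`, so that no `(p - 1) ^ (d - 1)` with truncated `d - 1` appears.
lemma natCast_sub_one_mul_sum_tsum_dualLat_le (hp : p.Prime) {b : ℝ} (hb : 1 ≤ b)
    (w : Finset (Fin d) → ℝ≥0∞) :
    ((p - 1 : ℕ) : ℝ≥0∞) * ∑ z ∈ genSet d p, ∑' h : dualLat d p z, korobovTerm b w h ≤
      2 * ((p - 1 : ℕ) : ℝ≥0∞) ^ d * ∑' h, korobovTerm b w h := by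
  set F := korobovTerm b w
  set q : ℝ≥0∞ := ((p - 1 : ℕ) : ℝ≥0∞)
  set S := {h : Fin d → ℤ | ∀ j, (p : ℤ) ∣ h j}
  have hpoint (h : Fin d → ℤ) :
      q * (((genSet d p).filter fun z => (p : ℤ) ∣ ∑ j, h j * z j).card * F h) ≤
        q ^ (d + 1) * S.indicator F h + q ^ d * F h := by
    rw [← mul_assoc]
    by_cases hS : h ∈ S
    · rw [Set.indicator_of_mem hS, pow_succ']
      refine le_add_right ?_
      gcongr
      rw [← Nat.cast_pow, ← card_genSet, Nat.cast_le]
      exact Finset.card_filter_le _ _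
    · obtain ⟨j₀, hj₀⟩ : ∃ j, ¬ (p : ℤ) ∣ h j := by simpa [S] using hS
      refine le_add_left ?_
      gcongr
      have := sub_one_mul_card_filter_dvd_dot_le hp hj₀
      simp only [q]
      exact_mod_cast this
  have hdvd := tsum_indicator_dvd_korobovTerm_le (by linarith : (0 : ℝ) ≤ b) w
    (Int.natCast_ne_zero.2 hp.ne_zero)
  rw [Int.cast_natCast, abs_of_nonneg (Nat.cast_nonneg _)] at hdvd
  calc q * ∑ z ∈ genSet d p, ∑' h : dualLat d p z, F h
      = ∑' h, q * (((genSet d p).filter fun z => (p : ℤ) ∣ ∑ j, h j * z j).card * F h) := by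
        rw [sum_tsum_dualLat_eq_tsum_card_mul F (korobovTerm_zero b w), ENNReal.tsum_mul_left]
    _ ≤ q ^ (d + 1) * ∑' h, S.indicator F h + q ^ d * ∑' h, F h := by
        rw [← ENNReal.tsum_mul_left, ← ENNReal.tsum_mul_left, ← ENNReal.tsum_add]
        exact ENNReal.tsum_le_tsum hpoint
    _ ≤ q ^ d * (q * ENNReal.ofReal ((p : ℝ) ^ (-b))) * ∑' h, F h + q ^ d * ∑' h, F h := by
        rw [pow_succ, mul_assoc, mul_assoc, mul_assoc]
        gcongr
    _ ≤ q ^ d * 1 * ∑' h, F h + q ^ d * ∑' h, F h := by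
        gcongr
        exact natCast_sub_one_mul_ofReal_rpow_neg_le_one hb hp.pos
    _ = 2 * q ^ d * ∑' h, F h := by ring

end Counting

lemma sub_one_mul_sum_Edet_rpow_le {p d : ℕ} (hp : p.Prime) {α : ℝ} {γ : Finset (Fin d) → ℝ}
    (hγ : ∀ u : Finset (Fin d), u.Nonempty → 0 ≤ γ u) {lam : ℝ} (hlam : 1 / 2 ≤ lam)
    (hlamα : lam < α) :
    ((p : ℝ) - 1) * ∑ z ∈ genSet d p, Edet d α γ p z ^ (1 / lam) ≤
      2 * ((p : ℝ) - 1) ^ d * Vd d (α / lam) (fun u => γ u ^ (1 / lam)) := by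
  have hb : 1 < α / lam := (one_lt_div (by linarith)).2 hlamα
  have hw (u : Finset (Fin d)) (hu : u.Nonempty) : 0 ≤ γ u ^ (1 / lam) :=
    Real.rpow_nonneg (hγ u hu) _
  have hq : ((p - 1 : ℕ) : ℝ) = (p : ℝ) - 1 := by rw [Nat.cast_sub hp.one_le, Nat.cast_one]
  have hRHS : 0 ≤ 2 * ((p : ℝ) - 1) ^ d * Vd d (α / lam) (fun u => γ u ^ (1 / lam)) := by
    rw [← hq]
    exact mul_nonneg (by positivity) (Vd_nonneg _ hw)
  rw [← ENNReal.ofReal_le_ofReal_iff hRHS, ← hq,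
    ENNReal.ofReal_mul (Nat.cast_nonneg _), ENNReal.ofReal_natCast,
    ENNReal.ofReal_sum_of_nonneg fun z _ => Real.rpow_nonneg (Edet_nonneg p z) _,
    ENNReal.ofReal_mul (by positivity : (0 : ℝ) ≤ 2 * ((p - 1 : ℕ) : ℝ) ^ d),
    ENNReal.ofReal_mul zero_le_two,
    ENNReal.ofReal_pow (Nat.cast_nonneg _), ENNReal.ofReal_natCast, ENNReal.ofReal_ofNat,
    ← tsum_korobovTerm_ofReal hb hw]
  calc ((p - 1 : ℕ) : ℝ≥0∞) * ∑ z ∈ genSet d p, ENNReal.ofReal (Edet d α γ p z ^ (1 / lam))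
      ≤ ((p - 1 : ℕ) : ℝ≥0∞) * ∑ z ∈ genSet d p, ∑' h : dualLat d p z,
          korobovTerm (α / lam) (fun u => ENNReal.ofReal (γ u ^ (1 / lam))) h := by
        gcongr with z
        exact ofReal_Edet_rpow_le hlam hγ p z
    _ ≤ _ := natCast_sub_one_mul_sum_tsum_dualLat_le hp hb.le _

theorem stmt_10_general (p d : ℕ) (hp : p.Prime) (α : ℝ)
    (γ : Finset (Fin d) → ℝ)
    (hγ : ∀ u : Finset (Fin d), u.Nonempty → 0 < γ u ∧ γ u ≤ 1)
    (lam : ℝ) (hlam : lam ∈ Set.Ico (1 / 2 : ℝ) α) :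
    (((p : ℝ) - 1) ^ d)⁻¹ * ∑ z ∈ genSet d p, Edet d α γ p z ^ (1 / lam) ≤
      2 / ((p : ℝ) - 1) * Vd d (α / lam) (fun u => γ u ^ (1 / lam)) := by
  have hγ₀ (u : Finset (Fin d)) (hu : u.Nonempty) : 0 ≤ γ u := (hγ u hu).1.le
  have hp₁ : (0 : ℝ) < (p : ℝ) - 1 := by
    have : (2 : ℝ) ≤ p := by exact_mod_cast hp.two_le
    linarith
  have key := sub_one_mul_sum_Edet_rpow_le hp hγ₀ hlam.1 hlam.2
  rw [inv_mul_le_iff₀ (by positivity)]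
  calc _ ≤ 2 * ((p : ℝ) - 1) ^ d * Vd d (α / lam) (fun u => γ u ^ (1 / lam)) / ((p : ℝ) - 1) := by
        rwa [le_div_iff₀' hp₁]
    _ = _ := by field_simp

/-- average of `E(p,z)^{1/λ}` over all generating vectors. -/
theorem stmt_10 (p d : ℕ) (hp : p.Prime) (α : ℝ) (hα : 1 / 2 < α)
    (γ : Finset (Fin d) → ℝ)
    (hγ : ∀ u : Finset (Fin d), u.Nonempty → 0 < γ u ∧ γ u ≤ 1)
    (lam : ℝ) (hlam : lam ∈ Set.Ico (1 / 2 : ℝ) α) :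
    (((p : ℝ) - 1) ^ d)⁻¹ * ∑ z ∈ genSet d p, Edet d α γ p z ^ (1 / lam) ≤
      2 / ((p : ℝ) - 1) * Vd d (α / lam) (fun u => γ u ^ (1 / lam)) :=
  stmt_10_general p d hp α γ hγ lam hlam
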